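/- arXiv:0710.5116 — 9 statements merged into one kernel-verified Lean document; each statement's English description precedes it below -/
import Mathlib

section
/- Let α be a type and d : α → α → ℝ a nonnegative function satisfying the triangle inequality in the form d(x,y) ≤ d(x,z) + d(y,z) for all x, y, z ∈ α. Let l ≥ 1 and let h : Fin l → α be a family of elements (the input haplotype reconstructions). Suppose h_HVP ∈ α minimizes the function a ↦ Σ_{i=1}^{l} d(h_i, a) over all of α, and suppose h_HSP ∈ {h_1, …, h_l} minimizes the same function over the set {h_1, …, h_l}. Then Σ_{i=1}^{l} d(h_i, h_HVP) ≤ Σ_{i=1}^{l} d(h_i, h_HSP) ≤ 2 · Σ_{i=1}^{l} d(h_i, h_HVP). -/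
/-- HSP solution is a 2-approximation of HVP: the optimal selection cost is
between the optimal voting cost and twice the optimal voting cost. -/
theorem hvp_hsp_approx {α : Type*} (d : α → α → ℝ)
    (hd_nonneg : ∀ x y : α, 0 ≤ d x y)
    (hd_tri : ∀ x y z : α, d x y ≤ d x z + d y z)
    (l : ℕ) (hl : 1 ≤ l) (h : Fin l → α)
    (hHVP hHSP : α)
    (hHVP_min : ∀ a : α, ∑ i, d (h i) hHVP ≤ ∑ i, d (h i) a)
    (hHSP_mem : ∃ j : Fin l, hHSP = h j)
    (hHSP_min : ∀ j : Fin l, ∑ i, d (h i) hHSP ≤ ∑ i, d (h i) (h j)) :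
    ∑ i, d (h i) hHVP ≤ ∑ i, d (h i) hHSP ∧
      ∑ i, d (h i) hHSP ≤ 2 * ∑ i, d (h i) hHVP := by
  constructor
  · exact hHVP_min hHSP
  · -- pick j minimizing d (h j) hHVP
    have hne : (Finset.univ : Finset (Fin l)).Nonempty :=
      ⟨⟨0, hl⟩, Finset.mem_univ _⟩
    obtain ⟨j, -, hjmin⟩ := Finset.exists_min_image Finset.univ
      (fun i => d (h i) hHVP) hne
    have key : ∑ i, d (h i) (h j) ≤
        (∑ i, d (h i) hHVP) + ∑ _i : Fin l, d (h j) hHVP := by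
      rw [← Finset.sum_add_distrib]
      exact Finset.sum_le_sum fun i _ => hd_tri (h i) (h j) hHVP
    have hconst : ∑ _i : Fin l, d (h j) hHVP = l * d (h j) hHVP := by
      simp [Finset.sum_const, mul_comm]
    have hbound : (l : ℝ) * d (h j) hHVP ≤ ∑ i, d (h i) hHVP := by
      calc (l : ℝ) * d (h j) hHVP = ∑ _i : Fin l, d (h j) hHVP := by
            simp [Finset.sum_const, mul_comm]
        _ ≤ ∑ i, d (h i) hHVP :=
            Finset.sum_le_sum fun i _ => hjmin i (Finset.mem_univ i)
    calc ∑ i, d (h i) hHSP ≤ ∑ i, d (h i) (h j) := hHSP_min j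
      _ ≤ (∑ i, d (h i) hHVP) + ∑ _i : Fin l, d (h j) hHVP := key
      _ = (∑ i, d (h i) hHVP) + l * d (h j) hHVP := by rw [hconst]
      _ ≤ (∑ i, d (h i) hHVP) + ∑ i, d (h i) hHVP := by linarith
      _ = 2 * ∑ i, d (h i) hHVP := by ring
end

section
/- Let α be a type and d : α → α → ℝ a nonnegative function satisfying the triangle inequality in the form d(x,y) ≤ d(x,z) + d(y,z) for all x, y, z ∈ α. Let l ≥ 1 and let h : Fin l → α. Suppose h_HVP ∈ α minimizes a ↦ Σ_{i=1}^{l} d(h_i, a) over all of α, suppose h_HSP ∈ {h_1, …, h_l} minimizes the same sum over {h_1, …, h_l}, and let j ∈ {1, …, l} be an index minimizing i ↦ d(h_i, h_HVP). Then Σ_{i=1}^{l} d(h_i, h_HSP) ≤ Σ_{i=1}^{l} d(h_i, h_j) ≤ 2 · Σ_{i=1}^{l} d(h_i, h_HSP). -/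
/-- The input reconstruction closest to the HVP solution is a 2-approximation
of the HSP solution. -/
theorem hvp_to_hsp_approx {α : Type*} (d : α → α → ℝ)
    (hd_nonneg : ∀ x y : α, 0 ≤ d x y)
    (hd_tri : ∀ x y z : α, d x y ≤ d x z + d y z)
    (l : ℕ) (hl : 1 ≤ l) (h : Fin l → α)
    (hHVP hHSP : α)
    (hHVP_min : ∀ a : α, ∑ i, d (h i) hHVP ≤ ∑ i, d (h i) a)
    (hHSP_mem : ∃ j : Fin l, hHSP = h j)
    (hHSP_min : ∀ j : Fin l, ∑ i, d (h i) hHSP ≤ ∑ i, d (h i) (h j))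
    (j : Fin l) (hj_min : ∀ i : Fin l, d (h j) hHVP ≤ d (h i) hHVP) :
    ∑ i, d (h i) hHSP ≤ ∑ i, d (h i) (h j) ∧
      ∑ i, d (h i) (h j) ≤ 2 * ∑ i, d (h i) hHSP := by
  refine ⟨hHSP_min j, ?_⟩
  have h1 : ∑ i, d (h i) (h j) ≤ ∑ i, (d (h i) hHVP + d (h j) hHVP) :=
    Finset.sum_le_sum fun i _ => hd_tri (h i) (h j) hHVP
  have h2 : ∑ i : Fin l, d (h j) hHVP ≤ ∑ i, d (h i) hHVP :=
    Finset.sum_le_sum fun i _ => hj_min i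
  have h3 : ∑ i, d (h i) hHVP ≤ ∑ i, d (h i) hHSP := hHVP_min hHSP
  calc ∑ i, d (h i) (h j) ≤ ∑ i, (d (h i) hHVP + d (h j) hHVP) := h1
    _ = ∑ i, d (h i) hHVP + ∑ i : Fin l, d (h j) hHVP := Finset.sum_add_distrib
    _ ≤ ∑ i, d (h i) hHVP + ∑ i, d (h i) hHVP := by linarith
    _ = 2 * ∑ i, d (h i) hHVP := by ring
    _ ≤ 2 * ∑ i, d (h i) hHSP := by linarith
end

section
/- Let σ be a type and d : (Fin m → σ) → (Fin m → σ) → ℝ≥0 a distance function on sequences of length m satisfying the triangle inequality in the form d(s,t) ≤ d(s,u) + d(t,u) for all s, t, u. Define the induced distance on (ordered representatives of unordered) pairs of sequences by D((a,b),(c,e)) = min(d(a,c) + d(b,e), d(a,e) + d(b,c)). Then D satisfies the triangle inequality in the same form: for all sequences a, b, c, e, u, v : Fin m → σ, D((a,b),(c,e)) ≤ D((a,b),(u,v)) + D((c,e),(u,v)). -/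
/-- The distance on unordered pairs of sequences induced by a distance on
sequences satisfying the triangle inequality also satisfies it. -/
theorem pair_dist_triangle {m : ℕ} {σ : Type*}
    (d : (Fin m → σ) → (Fin m → σ) → NNReal)
    (hd_tri : ∀ s t u : Fin m → σ, d s t ≤ d s u + d t u)
    (a b c e u v : Fin m → σ) :
    min (d a c + d b e) (d a e + d b c) ≤
      min (d a u + d b v) (d a v + d b u) +
        min (d c u + d e v) (d c v + d e u) := by
  rcases min_cases (d a u + d b v) (d a v + d b u) with ⟨h1, _⟩ | ⟨h1, _⟩ <;>
    rcases min_cases (d c u + d e v) (d c v + d e u) with ⟨h2, _⟩ | ⟨h2, _⟩ <;>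
    rw [h1, h2]
  · refine le_trans (min_le_left _ _) ?_
    calc d a c + d b e ≤ (d a u + d c u) + (d b v + d e v) :=
          add_le_add (hd_tri a c u) (hd_tri b e v)
      _ = (d a u + d b v) + (d c u + d e v) := by ring
  · refine le_trans (min_le_right _ _) ?_
    calc d a e + d b c ≤ (d a u + d e u) + (d b v + d c v) :=
          add_le_add (hd_tri a e u) (hd_tri b c v)
      _ = (d a u + d b v) + (d c v + d e u) := by ring
  · refine le_trans (min_le_right _ _) ?_
    calc d a e + d b c ≤ (d a v + d e v) + (d b u + d c u) :=
          add_le_add (hd_tri a e v) (hd_tri b c u)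
      _ = (d a v + d b u) + (d c u + d e v) := by ring
  · refine le_trans (min_le_left _ _) ?_
    calc d a c + d b e ≤ (d a v + d c v) + (d b u + d e u) :=
          add_le_add (hd_tri a c v) (hd_tri b e u)
      _ = (d a v + d b u) + (d c v + d e u) := by ring
end

section
/- Let S ⊆ Fin m be a finite set with |S| = m', and let h, h_1, …, h_l : Fin m → Bool all agree at every position outside S. Suppose that for each i ∈ {1, …, l} the Hamming distance between the haplotype pairs {h_i, flip_S h_i} and {h, flip_S h} is strictly less than m'/2. Then there exists a family a : Fin l → (Fin m → Bool) such that for every i, a_i = h_i or a_i = flip_S h_i, the Hamming distance d_H(a_i, h) < m'/4 for every i, and for all i, j ∈ {1, …, l}: d_H(a_i, a_j) < d_H(a_i, flip_S a_j); that is, the ordering of each input pair induced by using any input pair as a reference point coincides with the ordering induced by using h as a reference point. -/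
/-- Negate a sequence at every position in `S`, leaving other positions
unchanged. -/
def flipS {m : ℕ} (S : Finset (Fin m)) (c : Fin m → Bool) : Fin m → Bool :=
  fun i => if i ∈ S then !(c i) else c i

lemma flipS_flipS {m : ℕ} (S : Finset (Fin m)) (c : Fin m → Bool) :
    flipS S (flipS S c) = c := by
  funext i; simp [flipS]; split <;> simp

lemma hammingDist_flipS {m : ℕ} (S : Finset (Fin m)) (x y : Fin m → Bool) :
    hammingDist (flipS S x) (flipS S y) = hammingDist x y := by
  unfold hammingDist
  congr 1
  apply Finset.filter_congr
  intro i _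
  simp only [flipS]
  split <;> simp

lemma hammingDist_add_flip {m : ℕ} (S : Finset (Fin m)) (x y : Fin m → Bool)
    (hxy : ∀ p, p ∉ S → x p = y p) :
    hammingDist x y + hammingDist x (flipS S y) = S.card := by
  unfold hammingDist
  have hdisj : Disjoint (Finset.univ.filter fun i => x i ≠ y i) (Finset.univ.filter fun i => x i ≠ flipS S y i) := by
    rw [Finset.disjoint_filter]
    intro i _ h1 h2
    apply h2
    simp only [flipS]
    split
    · rcases Bool.eq_false_or_eq_true (x i) with hx | hx <;>
        rcases Bool.eq_false_or_eq_true (y i) with hy | hy <;> simp_all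
    · rename_i hn; exact hxy i hn
  rw [← Finset.card_union_of_disjoint hdisj]
  congr 1
  ext i
  simp only [Finset.mem_union, Finset.mem_filter, Finset.mem_univ, true_and]
  constructor
  · rintro (hi | hi)
    · by_contra hn; exact hi (hxy i hn)
    · by_contra hn
      apply hi
      rw [hxy i hn]
      simp [flipS, hn]
  · intro hi
    by_cases hxyi : x i = y i
    · right
      simp only [flipS, if_pos hi, hxyi]
      rcases Bool.eq_false_or_eq_true (y i) with hy | hy <;> simp [hy]
    · left; exact hxyi

/-- If all input haplotype pairs are within pair Hamming distance m'/2 of the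
pair determined by `h`, then the orderings induced by any input pair and by
`h` coincide. -/
theorem ordering_from_reference {m m' l : ℕ} (S : Finset (Fin m))
    (hS : S.card = m')
    (h : Fin m → Bool) (hs : Fin l → (Fin m → Bool))
    (hagree : ∀ i : Fin l, ∀ p : Fin m, p ∉ S → hs i p = h p)
    (hclose : ∀ i : Fin l,
      (min (hammingDist (hs i) h + hammingDist (flipS S (hs i)) (flipS S h))
           (hammingDist (hs i) (flipS S h) + hammingDist (flipS S (hs i)) h)
        : ℝ) < m' / 2) :
    ∃ a : Fin l → (Fin m → Bool),
      (∀ i, a i = hs i ∨ a i = flipS S (hs i)) ∧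
      (∀ i, (hammingDist (a i) h : ℝ) < m' / 4) ∧
      (∀ i j, hammingDist (a i) (a j) < hammingDist (a i) (flipS S (a j))) := by
  set a : Fin l → (Fin m → Bool) := fun i =>
    if hammingDist (hs i) h ≤ hammingDist (hs i) (flipS S h) then hs i
    else flipS S (hs i) with ha
  have hchoice : ∀ i, a i = hs i ∨ a i = flipS S (hs i) := by
    intro i; simp only [ha]; split
    · exact Or.inl rfl
    · exact Or.inr rfl
  have hflip_h : ∀ x : Fin m → Bool, hammingDist (flipS S x) h = hammingDist x (flipS S h) := by
    intro x
    conv_lhs => rw [← flipS_flipS S h]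
    exact hammingDist_flipS S x (flipS S h)
  have hquarter : ∀ i, (hammingDist (a i) h : ℝ) < m' / 4 := by
    intro i
    have hc := hclose i
    rw [hammingDist_flipS, hflip_h] at hc
    have hmin : (min (hammingDist (hs i) h) (hammingDist (hs i) (flipS S h)) : ℝ) < m' / 4 := by
      rcases min_cases ((hammingDist (hs i) h : ℝ) + hammingDist (hs i) h)
        ((hammingDist (hs i) (flipS S h) : ℝ) + hammingDist (hs i) (flipS S h)) with ⟨he, hle⟩ | ⟨he, hle⟩ <;>
        rw [he] at hc
      · calc (min (hammingDist (hs i) h) (hammingDist (hs i) (flipS S h)) : ℝ)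
            ≤ hammingDist (hs i) h := by
              exact_mod_cast min_le_left _ _
          _ < m' / 4 := by linarith
      · calc (min (hammingDist (hs i) h) (hammingDist (hs i) (flipS S h)) : ℝ)
            ≤ hammingDist (hs i) (flipS S h) := by
              exact_mod_cast min_le_right _ _
          _ < m' / 4 := by linarith
    have : (hammingDist (a i) h : ℝ) =
        min (hammingDist (hs i) h) (hammingDist (hs i) (flipS S h)) := by
      simp only [ha]
      split <;> rename_i hle
      · rw [min_eq_left hle]
      · rw [hflip_h, min_eq_right (le_of_not_ge hle)]
    rw [this]
    exact_mod_cast hmin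
  have hagree_a : ∀ i : Fin l, ∀ p : Fin m, p ∉ S → a i p = h p := by
    intro i p hp
    rcases hchoice i with he | he <;> rw [he]
    · exact hagree i p hp
    · simp only [flipS, if_neg hp]; exact hagree i p hp
  refine ⟨a, hchoice, hquarter, ?_⟩
  intro i j
  have hsum : hammingDist (a i) (a j) + hammingDist (a i) (flipS S (a j)) = m' := by
    rw [← hS]
    exact hammingDist_add_flip S (a i) (a j)
      (fun p hp => (hagree_a i p hp).trans (hagree_a j p hp).symm)
  have htri : hammingDist (a i) (a j) ≤ hammingDist (a i) h + hammingDist h (a j) :=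
    hammingDist_triangle _ _ _
  have hj : (hammingDist (h) (a j) : ℝ) < m' / 4 := by
    rw [hammingDist_comm]; exact hquarter j
  have h1 : (hammingDist (a i) (a j) : ℝ) < m' / 2 := by
    have := hquarter i
    have htri' : (hammingDist (a i) (a j) : ℝ) ≤ hammingDist (a i) h + hammingDist h (a j) := by
      exact_mod_cast htri
    linarith
  have hsum' : (hammingDist (a i) (a j) : ℝ) + hammingDist (a i) (flipS S (a j)) = m' := by
    exact_mod_cast hsum
  have : (hammingDist (a i) (a j) : ℝ) < hammingDist (a i) (flipS S (a j)) := by linarith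
  exact_mod_cast this
end

section
/- Fix m' ≥ 2 and a strictly monotone map e : Fin m' → Fin m with range S, and let h_1, …, h_l : Fin m → Bool (l ≥ 1) be haplotypes that all agree at every position outside S. Let t : Fin (m'−1) → Bool be a coordinatewise majority of the switch sequences, i.e., for each j, |{i : s(h_i)(j) = t(j)}| ≥ |{i : s(h_i)(j) ≠ t(j)}|. Then for every haplotype h* agreeing with h_1 outside S whose switch sequence satisfies s(h*) = t, and for every haplotype h agreeing with h_1 outside S, we have Σ_{i=1}^{l} hammingDist(s(h_i), s(h*)) ≤ Σ_{i=1}^{l} hammingDist(s(h_i), s(h)); that is, the majority-vote switch sequence solves the haplotyper voting problem for the switch distance. -/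
/-- The switch sequence of a haplotype, with respect to the heterozygous
marker positions given by `e`. -/
def switchSeq {m m' : ℕ} (e : Fin m' → Fin m) (h : Fin m → Bool) :
    Fin (m' - 1) → Bool :=
  fun j => h (e ⟨j.1, by have := j.isLt; omega⟩) !=
    h (e ⟨j.1 + 1, by have := j.isLt; omega⟩)

/-- The coordinatewise majority of the switch sequences solves the haplotyper
voting problem for the switch distance. -/
theorem switch_voting_majority {m m' l : ℕ} (hm' : 2 ≤ m') (hl : 1 ≤ l)
    (e : Fin m' → Fin m) (he : StrictMono e)
    (hs : Fin l → (Fin m → Bool))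
    (hagree : ∀ i j : Fin l, ∀ p : Fin m, p ∉ Set.range e → hs i p = hs j p)
    (t : Fin (m' - 1) → Bool)
    (hmaj : ∀ j : Fin (m' - 1),
      (Finset.univ.filter fun i : Fin l => switchSeq e (hs i) j = t j).card ≥
        (Finset.univ.filter fun i : Fin l => switchSeq e (hs i) j ≠ t j).card)
    (hstar : Fin m → Bool)
    (hstar_agree : ∀ p : Fin m, p ∉ Set.range e → hstar p = hs ⟨0, hl⟩ p)
    (hstar_switch : switchSeq e hstar = t)
    (h : Fin m → Bool)
    (h_agree : ∀ p : Fin m, p ∉ Set.range e → h p = hs ⟨0, hl⟩ p) :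
    ∑ i, hammingDist (switchSeq e (hs i)) (switchSeq e hstar) ≤
      ∑ i, hammingDist (switchSeq e (hs i)) (switchSeq e h) := by
  rw [hstar_switch]
  simp only [hammingDist, Finset.card_eq_sum_ones, Finset.sum_filter]
  rw [Finset.sum_comm]
  conv_rhs => rw [Finset.sum_comm]
  apply Finset.sum_le_sum
  intro j _
  by_cases hc : t j = switchSeq e h j
  · simp [hc]
  · have key := hmaj j
    simp only [Finset.card_eq_sum_ones, Finset.sum_filter] at key
    refine key.trans (le_of_eq ?_)
    apply Finset.sum_congr rfl
    intro i _
    have : (switchSeq e (hs i) j = t j) ↔ (switchSeq e (hs i) j ≠ switchSeq e h j) := by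
      cases ht : t j <;> cases hh : switchSeq e h j <;> simp_all <;>
        cases switchSeq e (hs i) j <;> simp_all
    simp only [this]
end

section
/- Fix m' ≥ 2 and a strictly monotone map e : Fin m' → Fin m with range S, and let a, c : Fin m → Bool agree at every position outside S. For each j ∈ {0, …, m'−2}, let PD_j be the pair Hamming distance between the pairs {a, flip_S a} and {c, flip_S c} restricted to the two-marker window {e(j), e(j+1)}, i.e., PD_j = min over the two pairings of the sums of Hamming distances of the restrictions of the four haplotypes to {e(j), e(j+1)}. Then Σ_{j=0}^{m'−2} PD_j = 2 · hammingDist(s(a), s(c)); that is, the 2-Hamming distance equals twice the switch distance. -/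
/-- The restriction of a haplotype to the two-marker window
`{e(j), e(j+1)}`. -/
def window {m m' : ℕ} (e : Fin m' → Fin m) (x : Fin m → Bool)
    (j : Fin (m' - 1)) : Fin 2 → Bool :=
  fun i => x (e ⟨j.1 + i.1, by have := j.isLt; have := i.isLt; omega⟩)

lemma key (x0 x1 y0 y1 : Bool) :
    (((if x0 = y0 then (0:ℕ) else 1) + if x1 = y1 then 0 else 1) +
        ((if (!x0) = !y0 then 0 else 1) + if (!x1) = !y1 then 0 else 1)) ⊓
      (((if x0 = !y0 then 0 else 1) + if x1 = !y1 then 0 else 1) +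
        ((if (!x0) = y0 then 0 else 1) + if (!x1) = y1 then 0 else 1)) =
    2 * if (x0 != x1) = (y0 != y1) then (0:ℕ) else 1 := by
  revert x0 x1 y0 y1; decide

lemma hd2 (f g : Fin 2 → Bool) :
    hammingDist f g = (if f 0 = g 0 then 0 else 1) + (if f 1 = g 1 then 0 else 1) := by
  simp [hammingDist, Finset.card_filter, Fin.sum_univ_two, ite_not]

/-- The 2-Hamming distance (sum over all two-marker windows of the pair
Hamming distance of the restrictions) equals twice the switch distance. -/
theorem two_hamming_eq_twice_switch {m m' : ℕ} (hm' : 2 ≤ m')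
    (e : Fin m' → Fin m) (he : StrictMono e)
    (a c : Fin m → Bool)
    (hagree : ∀ p : Fin m, p ∉ Set.range e → a p = c p) :
    ∑ j : Fin (m' - 1),
      min (hammingDist (window e a j) (window e c j) +
            hammingDist (window e (flipS (Finset.univ.image e) a) j)
              (window e (flipS (Finset.univ.image e) c) j))
          (hammingDist (window e a j) (window e (flipS (Finset.univ.image e) c) j) +
            hammingDist (window e (flipS (Finset.univ.image e) a) j)
              (window e c j)) =
      2 * hammingDist (switchSeq e a) (switchSeq e c) := by
  have hrhs : hammingDist (switchSeq e a) (switchSeq e c)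
      = ∑ j : Fin (m' - 1), if switchSeq e a j = switchSeq e c j then 0 else 1 := by
    simp [hammingDist, Finset.card_filter, ite_not]
  rw [hrhs, Finset.mul_sum]
  apply Finset.sum_congr rfl
  intro j _
  have hlt0 : (j : ℕ) < m' := by have := j.isLt; omega
  have hlt1 : (j : ℕ) + 1 < m' := by have := j.isLt; omega
  have h0 : e ⟨j.1, hlt0⟩ ∈ Finset.univ.image e :=
    Finset.mem_image_of_mem _ (Finset.mem_univ _)
  have h1 : e ⟨j.1 + 1, hlt1⟩ ∈ Finset.univ.image e :=
    Finset.mem_image_of_mem _ (Finset.mem_univ _)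
  have w0 : ∀ x : Fin m → Bool, window e x j 0 = x (e ⟨j.1, hlt0⟩) := fun x => rfl
  have w1 : ∀ x : Fin m → Bool, window e x j 1 = x (e ⟨j.1 + 1, hlt1⟩) := fun x => rfl
  rw [hd2, hd2, hd2, hd2]
  simp only [w0, w1, flipS, switchSeq, if_pos h0, if_pos h1]
  exact key (a (e ⟨j.1, hlt0⟩)) (a (e ⟨j.1 + 1, hlt1⟩))
    (c (e ⟨j.1, hlt0⟩)) (c (e ⟨j.1 + 1, hlt1⟩))
end

section
/- Fix m' ≥ 2, a strictly monotone map e : Fin m' → Fin m, and a baseline haplotype c : Fin m → Bool. Then for every binary sequence t : Fin (m'−1) → Bool there exists a haplotype a : Fin m → Bool such that a(i) = c(i) for every i outside the range of e, and the switch sequence of a satisfies s(a) = t. -/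
/-- Every binary sequence of length m'-1 is the switch sequence of some
haplotype consistent with the given genotype. -/
theorem switchSeq_surjective {m m' : ℕ} (hm' : 2 ≤ m')
    (e : Fin m' → Fin m) (he : StrictMono e) (c : Fin m → Bool)
    (t : Fin (m' - 1) → Bool) :
    ∃ a : Fin m → Bool,
      (∀ i : Fin m, i ∉ Set.range e → a i = c i) ∧ switchSeq e a = t := by
  classical
  -- prefix xor values
  let f : ℕ → Bool := fun k => Nat.rec false
    (fun n fn => if h : n < m' - 1 then xor fn (t ⟨n, h⟩) else false) k
  let a : Fin m → Bool := fun i =>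
    if h : ∃ j, e j = i then f (Classical.choose h).1 else c i
  have ha : ∀ j : Fin m', a (e j) = f j.1 := by
    intro j
    have h : ∃ j', e j' = e j := ⟨j, rfl⟩
    have := Classical.choose_spec h
    have : Classical.choose h = j := he.injective this
    simp only [a, dif_pos h, this]
  refine ⟨a, ?_, ?_⟩
  · intro i hi
    have : ¬ ∃ j, e j = i := by
      rintro ⟨j, rfl⟩; exact hi ⟨j, rfl⟩
    simp [a, this]
  · funext j
    have hj := j.isLt
    simp only [switchSeq, ha]
    show (f j.1 != f (j.1 + 1)) = t j
    have : f (j.1 + 1) = xor (f j.1) (t ⟨j.1, hj⟩) := by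
      simp [f, dif_pos hj]
    rw [this]
    cases f j.1 <;> cases t ⟨j.1, hj⟩ <;> simp_all
end

section
/- Fix m' ≥ 2 and a strictly monotone map e : Fin m' → Fin m with range S. If a, b : Fin m → Bool agree at every position outside S and their switch sequences are equal, s(a) = s(b), then b = a or b = flip_S a; that is, two haplotype pairs consistent with the same genotype that have the same switch sequence are equal as unordered pairs. -/
/-- Two haplotypes consistent with the same genotype having the same switch
sequence determine the same unordered haplotype pair. -/
theorem switchSeq_injective_on_pairs {m m' : ℕ} (hm' : 2 ≤ m')
    (e : Fin m' → Fin m) (he : StrictMono e)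
    (a b : Fin m → Bool)
    (hagree : ∀ p : Fin m, p ∉ Set.range e → a p = b p)
    (hswitch : switchSeq e a = switchSeq e b) :
    b = a ∨ b = flipS (Finset.univ.image e) a := by
  have h0 : 0 < m' := by omega
  have key : ∀ k (hk : k < m'),
      (a (e ⟨k, hk⟩) == b (e ⟨k, hk⟩)) = (a (e ⟨0, h0⟩) == b (e ⟨0, h0⟩)) := by
    intro k
    induction k with
    | zero => intro hk; rfl
    | succ n ih =>
      intro hk
      have hn : n < m' := by omega
      have hj : n < m' - 1 := by omega
      have hs := congrFun hswitch ⟨n, hj⟩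
      simp only [switchSeq] at hs
      have := ih hn
      revert hs this
      cases a (e ⟨n, hn⟩) <;> cases b (e ⟨n, hn⟩) <;>
        cases a (e ⟨n + 1, hk⟩) <;> cases b (e ⟨n + 1, hk⟩) <;>
        cases a (e ⟨0, h0⟩) <;> cases b (e ⟨0, h0⟩) <;> simp
  by_cases h : a (e ⟨0, h0⟩) = b (e ⟨0, h0⟩)
  · left
    funext p
    by_cases hp : p ∈ Set.range e
    · obtain ⟨j, rfl⟩ := hp
      have := key j.1 j.isLt
      simp only [Fin.eta] at this
      rw [h] at this
      have h2 : a (e j) = b (e j) := by simpa using this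
      exact h2.symm
    · exact (hagree p hp).symm
  · right
    funext p
    by_cases hp : p ∈ Set.range e
    · obtain ⟨j, rfl⟩ := hp
      have := key j.1 j.isLt
      simp only [Fin.eta] at this
      have hmem : e j ∈ Finset.univ.image e := Finset.mem_image_of_mem e (Finset.mem_univ j)
      simp only [flipS, hmem, if_pos]
      revert this h
      cases a (e j) <;> cases b (e j) <;> cases a (e ⟨0, h0⟩) <;> cases b (e ⟨0, h0⟩) <;> simp
    · have hmem : p ∉ Finset.univ.image e := by
        simp only [Finset.mem_image, Finset.mem_univ, true_and]
        intro ⟨j, hj⟩; exact hp ⟨j, hj⟩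
      simp only [flipS, hmem, if_neg, not_false_iff]
      exact (hagree p hp).symm
end

section
/- Define the switch operation at position p ∈ Fin m on an ordered pair (x, y) of haplotypes x, y : Fin m → Bool as producing the pair (x', y') with x'(i) = x(i) and y'(i) = y(i) for all i ≤ p, and x'(i) = y(i) and y'(i) = x(i) for all i > p. Let S ⊆ Fin m and let a, c : Fin m → Bool agree at every position outside S. Then there exists a finite sequence of switch operations transforming the ordered pair (a, flip_S a) into either (c, flip_S c) or (flip_S c, c); that is, any two haplotype pairs corresponding to the same genotype are connected by a sequence of switches. -/
/-- A switch at position `p` exchanges the tails (after position `p`) of the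
two haplotypes of an ordered pair. -/
def switchAt {m : ℕ} (p : Fin m)
    (xy : (Fin m → Bool) × (Fin m → Bool)) :
    (Fin m → Bool) × (Fin m → Bool) :=
  (fun i => if i ≤ p then xy.1 i else xy.2 i,
   fun i => if i ≤ p then xy.2 i else xy.1 i)

/-- Flip a single position. -/
def flip1 {m : ℕ} (i : Fin m) (b : Fin m → Bool) : Fin m → Bool :=
  fun j => if j = i then !b j else b j

lemma switch_shape {m : ℕ} (S : Finset (Fin m)) (p : Fin m) (b : Fin m → Bool) :
    switchAt p (b, flipS S b) =
      ((fun j => if j ≤ p then b j else flipS S b j),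
       flipS S (fun j => if j ≤ p then b j else flipS S b j)) := by
  unfold switchAt flipS
  refine Prod.ext rfl ?_
  funext j
  by_cases hj : j ∈ S <;> by_cases hjp : j ≤ p <;> simp [hj, hjp]

lemma two_switches {m : ℕ} (S : Finset (Fin m)) (i : Fin m) (hiS : i ∈ S)
    (hi : 0 < (i : ℕ)) (b : Fin m → Bool) :
    switchAt i (switchAt ⟨(i : ℕ) - 1, lt_of_le_of_lt (Nat.sub_le _ _) i.isLt⟩
      (b, flipS S b)) = (flip1 i b, flipS S (flip1 i b)) := by
  set p : Fin m := ⟨(i : ℕ) - 1, lt_of_le_of_lt (Nat.sub_le _ _) i.isLt⟩ with hp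
  rw [switch_shape, switch_shape]
  have hfun : (fun j => if j ≤ i then (fun j => if j ≤ p then b j else flipS S b j) j
      else flipS S (fun j => if j ≤ p then b j else flipS S b j) j) = flip1 i b := by
    funext j
    have hpi : (p : ℕ) = (i : ℕ) - 1 := rfl
    unfold flip1 flipS
    by_cases hji : j = i
    · subst hji
      have h2 : ¬ j ≤ p := by
        simp only [Fin.le_def, hpi]; omega
      simp only [le_refl, if_true, if_neg h2, if_pos hiS]
    · by_cases hle : j ≤ i
      · have hlt : (j : ℕ) < (i : ℕ) := by
          rcases lt_or_eq_of_le hle with h | h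
          · exact h
          · exact absurd (Fin.ext (by exact_mod_cast congrArg Fin.val h)) hji
        have h2 : j ≤ p := by simp only [Fin.le_def, hpi]; omega
        simp [hle, h2, hji]
      · have hgt : (i : ℕ) < (j : ℕ) := by
          exact lt_of_not_ge fun h => hle (Fin.le_def.mpr h)
        have h2 : ¬ j ≤ p := by simp only [Fin.le_def, hpi]; omega
        by_cases hj : j ∈ S <;> simp [hle, h2, hj, hji]
  rw [hfun]

/-- Flip every position in `E`. -/
def flipE {m : ℕ} (E : Finset (Fin m)) (b : Fin m → Bool) : Fin m → Bool :=
  fun j => if j ∈ E then !b j else b j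

lemma reach_flipE {m : ℕ} (S : Finset (Fin m)) (a : Fin m → Bool)
    (E : Finset (Fin m)) (hE : ∀ i ∈ E, i ∈ S ∧ 0 < (i : ℕ)) :
    ∃ L : List (Fin m),
      L.foldl (fun pr p => switchAt p pr) (a, flipS S a)
        = (flipE E a, flipS S (flipE E a)) := by
  classical
  induction E using Finset.induction_on with
  | empty =>
    refine ⟨[], ?_⟩
    have : flipE ∅ a = a := funext fun j => by simp [flipE]
    simp [this]
  | @insert i E hiE ih =>
    obtain ⟨L, hL⟩ := ih (fun j hj => hE j (Finset.mem_insert_of_mem hj))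
    obtain ⟨hiS, hi0⟩ := hE i (Finset.mem_insert_self i E)
    refine ⟨L ++ [⟨(i : ℕ) - 1, lt_of_le_of_lt (Nat.sub_le _ _) i.isLt⟩, i], ?_⟩
    rw [List.foldl_append, hL]
    simp only [List.foldl_cons, List.foldl_nil]
    rw [two_switches S i hiS hi0]
    have : flip1 i (flipE E a) = flipE (insert i E) a := by
      funext j
      unfold flip1 flipE
      by_cases hji : j = i
      · subst hji; simp [hiE]
      · simp [hji]
    rw [this]

lemma reach_target {m : ℕ} (S : Finset (Fin m)) (a t : Fin m → Bool)
    (hout : ∀ p : Fin m, p ∉ S → a p = t p)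
    (h0 : ∀ i : Fin m, (i : ℕ) = 0 → a i = t i) :
    ∃ L : List (Fin m),
      L.foldl (fun pr p => switchAt p pr) (a, flipS S a) = (t, flipS S t) := by
  classical
  set E : Finset (Fin m) := S.filter (fun j => a j ≠ t j) with hEdef
  have hE : ∀ i ∈ E, i ∈ S ∧ 0 < (i : ℕ) := by
    intro i hi
    rw [hEdef, Finset.mem_filter] at hi
    refine ⟨hi.1, ?_⟩
    by_contra h
    exact hi.2 (h0 i (by omega))
  obtain ⟨L, hL⟩ := reach_flipE S a E hE
  have ht : flipE E a = t := by
    funext j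
    unfold flipE
    by_cases hj : j ∈ E
    · rw [hEdef, Finset.mem_filter] at hj
      have := hj.2
      simp [hj, hEdef]
      revert this
      cases a j <;> cases t j <;> simp
    · rw [hEdef, Finset.mem_filter] at hj
      push_neg at hj
      simp only [hEdef]
      by_cases hjS : j ∈ S
      · have := hj hjS
        simp [Finset.mem_filter, hjS, this]
      · simp [Finset.mem_filter, hjS, hout j hjS]
  rw [ht] at hL
  exact ⟨L, hL⟩

/-- Any two haplotype pairs corresponding to the same genotype are connected
by a finite sequence of switches. -/
theorem switches_connect_pairs {m : ℕ} (S : Finset (Fin m))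
    (a c : Fin m → Bool) (hagree : ∀ p : Fin m, p ∉ S → a p = c p) :
    ∃ L : List (Fin m),
      L.foldl (fun pr p => switchAt p pr) (a, flipS S a) = (c, flipS S c) ∨
      L.foldl (fun pr p => switchAt p pr) (a, flipS S a) = (flipS S c, c) := by
  classical
  rcases Nat.eq_zero_or_pos m with hm | hm
  · subst hm
    refine ⟨[], Or.inl ?_⟩
    have : a = c := funext fun j => j.elim0
    subst this
    simp
  · set z : Fin m := ⟨0, hm⟩ with hz
    by_cases h0 : a z = c z
    · obtain ⟨L, hL⟩ := reach_target S a c hagree (fun i hi => by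
        have : i = z := Fin.ext (by simp [hz, hi])
        rw [this]; exact h0)
      exact ⟨L, Or.inl hL⟩
    · have hfs : flipS S (flipS S c) = c := by
        funext j
        unfold flipS
        by_cases hj : j ∈ S <;> simp [hj]
      have hout : ∀ p : Fin m, p ∉ S → a p = flipS S c p := by
        intro p hp
        unfold flipS
        simp [hp, hagree p hp]
      have hz0 : ∀ i : Fin m, (i : ℕ) = 0 → a i = flipS S c i := by
        intro i hi
        have hiz : i = z := Fin.ext (by simp [hz, hi])
        have hzS : z ∈ S := by
          by_contra h
          exact h0 (hagree z h)
        rw [hiz]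
        unfold flipS
        simp only [hzS, if_true]
        revert h0
        cases a z <;> cases c z <;> simp
      obtain ⟨L, hL⟩ := reach_target S a (flipS S c) hout hz0
      rw [hfs] at hL
      exact ⟨L, Or.inr hL⟩
end
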